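/- arXiv:2508.02318 — 4 statements merged into one kernel-verified Lean document; each statement's English description precedes it below -/
import Mathlib

section
/- Let (q_i)_{i≥1} be a sequence of distinct prime numbers such that ∑_{i=1}^∞ 1/q_i = ∞. For a positive integer n, let v_q(n) denote the number of indices i such that q_i divides n. Then for every positive integer A, the set of positive integers n with v_q(n) < A has asymptotic density 0. -/
open Filter
open Finset in
open Finset in
lemma prod_dvd_iff' (q : ℕ → ℕ) (hq : ∀ i, (q i).Prime) (hinj : Function.Injective q)
    (t : Finset ℕ) (n : ℕ) : (∏ i ∈ t, q i) ∣ n ↔ ∀ i ∈ t, q i ∣ n := by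
  constructor
  · intro h i hi
    exact (Finset.dvd_prod_of_mem _ hi).trans h
  · intro h
    have himg : ∏ p ∈ t.image q, (p : ℕ) = ∏ i ∈ t, q i :=
      Finset.prod_image (g := q) (f := fun p => p) (fun a _ b _ hab => hinj hab)
    rw [← himg]
    exact Finset.prod_primes_dvd n (fun p hp => by
      obtain ⟨i, _, rfl⟩ := Finset.mem_image.1 hp; exact (hq i).prime)
      (fun p hp => by obtain ⟨i, hi, rfl⟩ := Finset.mem_image.1 hp; exact h i hi)

lemma key_identity (q : ℕ → ℕ) (hq : ∀ i, (q i).Prime) (hinj : Function.Injective q)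
    (x N : ℕ) :
    ∑ n ∈ Finset.Ioc 0 x, ∏ i ∈ Finset.range N, (if q i ∣ n then (1/2:ℝ) else 1)
      = ∑ t ∈ (Finset.range N).powerset,
          (-(1/2):ℝ)^t.card * ((x / ∏ i ∈ t, q i : ℕ) : ℝ) := by
  have step1 : ∀ n, ∏ i ∈ Finset.range N, (if q i ∣ n then (1/2:ℝ) else 1)
      = ∑ t ∈ (Finset.range N).powerset,
          (if (∏ i ∈ t, q i) ∣ n then (-(1/2):ℝ)^t.card else 0) := by
    intro n
    have h1 : ∏ i ∈ Finset.range N, (if q i ∣ n then (1/2:ℝ) else 1)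
        = ∏ i ∈ Finset.range N, ((if q i ∣ n then (-(1/2):ℝ) else 0) + 1) := by
      refine Finset.prod_congr rfl fun i _ => ?_
      split_ifs <;> norm_num
    rw [h1, Finset.prod_add]
    refine Finset.sum_congr rfl fun t ht => ?_
    rw [Finset.prod_const_one, mul_one]
    by_cases hd : (∏ i ∈ t, q i) ∣ n
    · rw [if_pos hd]
      have := (prod_dvd_iff' q hq hinj t n).1 hd
      calc ∏ i ∈ t, (if q i ∣ n then (-(1/2):ℝ) else 0)
          = ∏ _i ∈ t, (-(1/2):ℝ) := Finset.prod_congr rfl fun i hi => if_pos (this i hi)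
        _ = (-(1/2):ℝ)^t.card := Finset.prod_const _
    · rw [if_neg hd]
      have hex : ∃ i ∈ t, ¬ q i ∣ n := by
        by_contra hc
        push_neg at hc
        exact hd ((prod_dvd_iff' q hq hinj t n).2 hc)
      obtain ⟨i, hi, hni⟩ := hex
      exact Finset.prod_eq_zero hi (if_neg hni)
  simp only [step1]
  rw [Finset.sum_comm]
  refine Finset.sum_congr rfl fun t ht => ?_
  rw [← Finset.sum_filter, Finset.sum_const, Nat.Ioc_filter_dvd_card_eq_div, nsmul_eq_mul,
    mul_comm]

open scoped Classical in
lemma pointwise_bound (q : ℕ → ℕ) (hinj : Function.Injective q)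
    (A N n : ℕ) (hn : 0 < n) (hcard : Nat.card {i | q i ∣ n} < A) :
    ((1:ℝ)/2)^(A-1) ≤ ∏ i ∈ Finset.range N, (if q i ∣ n then (1/2:ℝ) else 1) := by
  have hfin : {i | q i ∣ n}.Finite :=
    Set.Finite.subset ((Set.finite_Iic n).preimage hinj.injOn)
      (fun i hi => Nat.le_of_dvd hn hi)
  have hk : ((Finset.range N).filter (fun i => q i ∣ n)).card ≤ A - 1 := by
    have h1 : ((Finset.range N).filter (fun i => q i ∣ n)) ⊆ hfin.toFinset := by
      intro i hi
      rw [Set.Finite.mem_toFinset]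
      exact (Finset.mem_filter.1 hi).2
    have h2 : Nat.card {i | q i ∣ n} = hfin.toFinset.card :=
      Nat.card_eq_card_finite_toFinset hfin
    have := Finset.card_le_card h1
    omega
  have hprod : ∏ i ∈ Finset.range N, (if q i ∣ n then (1/2:ℝ) else 1)
      = ((1:ℝ)/2) ^ ((Finset.range N).filter (fun i => q i ∣ n)).card := by
    rw [Finset.prod_ite (fun _ => (1/2:ℝ)) (fun _ => (1:ℝ)), Finset.prod_const,
      Finset.prod_const_one, mul_one]
  rw [hprod]
  exact pow_le_pow_of_le_one (by norm_num) (by norm_num) hk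

open scoped Classical in
lemma main_bound (q : ℕ → ℕ) (hq : ∀ i, (q i).Prime) (hinj : Function.Injective q)
    (A N x : ℕ) (hA : 0 < A) :
    (((Finset.Icc 1 x).filter (fun n => Nat.card {i | q i ∣ n} < A)).card : ℝ)
      ≤ 2^(A-1) * ((x : ℝ) * ∏ i ∈ Finset.range N, (1 - 1/(2*(q i:ℝ))) + (3/2)^N) := by
  have hIcc : Finset.Icc 1 x = Finset.Ioc 0 x := Finset.Icc_add_one_left_eq_Ioc 0 x
  set B := (Finset.Icc 1 x).filter (fun n => Nat.card {i | q i ∣ n} < A) with hB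
  -- lower bound the weighted sum by card B * (1/2)^(A-1)
  have step1 : (B.card : ℝ) * ((1:ℝ)/2)^(A-1)
      ≤ ∑ n ∈ Finset.Ioc 0 x, ∏ i ∈ Finset.range N, (if q i ∣ n then (1/2:ℝ) else 1) := by
    have h1 : (B.card : ℝ) * ((1:ℝ)/2)^(A-1) = ∑ _n ∈ B, ((1:ℝ)/2)^(A-1) := by
      rw [Finset.sum_const, nsmul_eq_mul]
    rw [h1]
    refine Finset.sum_le_sum_of_subset_of_nonneg ?_ ?_ |>.trans' (Finset.sum_le_sum ?_)
    · rw [hB, hIcc]; exact Finset.filter_subset _ _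
    · intro n _ _
      exact Finset.prod_nonneg fun i _ => by split_ifs <;> norm_num
    · intro n hn
      have hmem := Finset.mem_filter.1 hn
      have hn1 : 0 < n := (Finset.mem_Icc.1 hmem.1).1
      exact pointwise_bound q hinj A N n hn1 hmem.2
  -- upper bound the weighted sum
  have step2 : ∑ n ∈ Finset.Ioc 0 x, ∏ i ∈ Finset.range N, (if q i ∣ n then (1/2:ℝ) else 1)
      ≤ (x : ℝ) * ∏ i ∈ Finset.range N, (1 - 1/(2*(q i:ℝ))) + (3/2)^N := by
    rw [key_identity q hq hinj x N]
    have hterm : ∀ t ∈ (Finset.range N).powerset,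
        (-(1/2):ℝ)^t.card * ((x / ∏ i ∈ t, q i : ℕ) : ℝ)
          ≤ (x:ℝ) * ∏ i ∈ t, (-(1/(2*(q i:ℝ)))) + ((1:ℝ)/2)^t.card := by
      intro t _
      set m := ∏ i ∈ t, q i with hm
      have hmpos : 0 < m := Finset.prod_pos fun i _ => (hq i).pos
      have hmR : (0:ℝ) < (m:ℝ) := by exact_mod_cast hmpos
      -- ∏ (-(1/(2 q i))) = (-(1/2))^|t| / m
      have hprodeq : ∏ i ∈ t, (-(1/(2*(q i:ℝ)))) = (-(1/2):ℝ)^t.card / (m:ℝ) := by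
        have : ∀ i ∈ t, (-(1/(2*(q i:ℝ)))) = (-(1/2):ℝ) * ((q i:ℝ))⁻¹ := by
          intro i _
          have : (0:ℝ) < (q i:ℝ) := by exact_mod_cast (hq i).pos
          field_simp
        rw [Finset.prod_congr rfl this, Finset.prod_mul_distrib, Finset.prod_const, hm]
        have hne : (∏ i ∈ t, (q i:ℝ)) ≠ 0 :=
          (Finset.prod_pos fun i _ => by exact_mod_cast (hq i).pos).ne'
        rw [Nat.cast_prod, eq_div_iff hne, mul_assoc, ← Finset.prod_mul_distrib]
        have hone : ∀ i ∈ t, ((q i:ℝ))⁻¹ * (q i:ℝ) = 1 := fun i _ =>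
          inv_mul_cancel₀ (by exact_mod_cast (hq i).pos.ne')
        rw [Finset.prod_congr rfl hone, Finset.prod_const_one, mul_one]
      have hu_le : ((x / m : ℕ) : ℝ) ≤ (x:ℝ) / (m:ℝ) := Nat.cast_div_le
      have hu_ge : (x:ℝ) / (m:ℝ) - 1 ≤ ((x / m : ℕ) : ℝ) := by
        rw [sub_le_iff_le_add, div_le_iff₀ hmR]
        have hmod : m * (x / m) + x % m = x := Nat.div_add_mod x m
        have hlt : x % m < m := Nat.mod_lt x hmpos
        have : x < (x / m + 1) * m := by
          calc x = m * (x / m) + x % m := hmod.symm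
            _ < m * (x / m) + m := by omega
            _ = (x / m + 1) * m := by ring
        calc (x:ℝ) ≤ ((x / m + 1) * m : ℕ) := by exact_mod_cast this.le
          _ = (((x/m:ℕ):ℝ) + 1) * (m:ℝ) := by push_cast; ring
      have habs : |((x / m : ℕ) : ℝ) - (x:ℝ)/(m:ℝ)| ≤ 1 := by
        rw [abs_le]; constructor <;> linarith
      have hkey : (-(1/2):ℝ)^t.card * ((x / m : ℕ) : ℝ)
          ≤ (-(1/2):ℝ)^t.card * ((x:ℝ)/(m:ℝ)) + ((1:ℝ)/2)^t.card := by
        have h1 : (-(1/2):ℝ)^t.card * ((x / m : ℕ) : ℝ)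
            - (-(1/2):ℝ)^t.card * ((x:ℝ)/(m:ℝ))
            = (-(1/2):ℝ)^t.card * (((x / m : ℕ) : ℝ) - (x:ℝ)/(m:ℝ)) := by ring
        have h2 : |(-(1/2):ℝ)^t.card * (((x / m : ℕ) : ℝ) - (x:ℝ)/(m:ℝ))|
            ≤ ((1:ℝ)/2)^t.card := by
          rw [abs_mul, abs_pow, abs_neg, abs_of_pos (by norm_num : (0:ℝ) < 1/2)]
          calc ((1:ℝ)/2)^t.card * |((x / m : ℕ) : ℝ) - (x:ℝ)/(m:ℝ)|
              ≤ ((1:ℝ)/2)^t.card * 1 := by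
                exact mul_le_mul_of_nonneg_left habs (by positivity)
            _ = ((1:ℝ)/2)^t.card := mul_one _
        nlinarith [le_abs_self ((-(1/2):ℝ)^t.card * (((x / m : ℕ) : ℝ) - (x:ℝ)/(m:ℝ)))]
      calc (-(1/2):ℝ)^t.card * ((x / m : ℕ) : ℝ)
          ≤ (-(1/2):ℝ)^t.card * ((x:ℝ)/(m:ℝ)) + ((1:ℝ)/2)^t.card := hkey
        _ = (x:ℝ) * ((-(1/2):ℝ)^t.card / (m:ℝ)) + ((1:ℝ)/2)^t.card := by ring
        _ = (x:ℝ) * ∏ i ∈ t, (-(1/(2*(q i:ℝ)))) + ((1:ℝ)/2)^t.card := by rw [hprodeq]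
    calc ∑ t ∈ (Finset.range N).powerset, (-(1/2):ℝ)^t.card * ((x / ∏ i ∈ t, q i : ℕ) : ℝ)
        ≤ ∑ t ∈ (Finset.range N).powerset,
            ((x:ℝ) * ∏ i ∈ t, (-(1/(2*(q i:ℝ)))) + ((1:ℝ)/2)^t.card) :=
          Finset.sum_le_sum hterm
      _ = (x:ℝ) * (∑ t ∈ (Finset.range N).powerset, ∏ i ∈ t, (-(1/(2*(q i:ℝ)))))
          + ∑ t ∈ (Finset.range N).powerset, ((1:ℝ)/2)^t.card := by
          rw [Finset.sum_add_distrib, Finset.mul_sum]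
      _ = (x : ℝ) * ∏ i ∈ Finset.range N, (1 - 1/(2*(q i:ℝ))) + (3/2)^N := by
          congr 1
          · congr 1
            have := Finset.prod_add (fun i => (-(1/(2*(q i:ℝ))))) (fun _ => (1:ℝ))
              (Finset.range N)
            simp only [Finset.prod_const_one, mul_one] at this
            rw [← this]
            refine Finset.prod_congr rfl fun i _ => by ring
          · have := Finset.prod_add (fun _ => ((1:ℝ)/2)) (fun _ => (1:ℝ)) (Finset.range N)
            simp only [Finset.prod_const_one, mul_one, Finset.prod_const,
              Finset.card_range] at this
            rw [← this]
            norm_num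

  -- combine
  have hhalf : ((1:ℝ)/2)^(A-1) = ((2:ℝ)^(A-1))⁻¹ := by
    rw [div_pow, one_pow, one_div]
  have h2pos : (0:ℝ) < 2^(A-1) := by positivity
  have := step1.trans step2
  calc (B.card : ℝ) = 2^(A-1) * ((B.card : ℝ) * ((1:ℝ)/2)^(A-1)) := by
        rw [hhalf]; field_simp
    _ ≤ 2^(A-1) * ((x : ℝ) * ∏ i ∈ Finset.range N, (1 - 1/(2*(q i:ℝ))) + (3/2)^N) := by
        exact mul_le_mul_of_nonneg_left this h2pos.le


open scoped Classical in
/-- If `q i` is a sequence of distinct primes with `∑ 1/qᵢ = ∞`, and `v_q(n)` counts the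
indices `i` with `qᵢ ∣ n`, then for every `A` the set of `n` with `v_q(n) < A` has density 0. -/
theorem density_few_prime_divisors_zero
    (q : ℕ → ℕ) (hq : ∀ i, (q i).Prime) (hinj : Function.Injective q)
    (hdiv : ¬ Summable (fun i => (1 : ℝ) / q i)) (A : ℕ) (hA : 0 < A) :
    Tendsto (fun x : ℕ =>
      (((Finset.Icc 1 x).filter (fun n => Nat.card {i | q i ∣ n} < A)).card : ℝ) / x)
      atTop (nhds 0) := by
  rw [Metric.tendsto_atTop]
  intro ε hε
  -- the partial sums of 1/(2 q i) tend to infinity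
  have hS : Tendsto (fun N => ∑ i ∈ Finset.range N, (1:ℝ)/(q i)) atTop atTop :=
    (not_summable_iff_tendsto_nat_atTop_of_nonneg (fun i => by positivity)).1 hdiv
  have hS2 : Tendsto (fun N => ∑ i ∈ Finset.range N, 1/(2*(q i:ℝ))) atTop atTop := by
    have heq : ∀ N : ℕ, ∑ i ∈ Finset.range N, 1/(2*(q i:ℝ))
        = (1/2) * ∑ i ∈ Finset.range N, (1:ℝ)/(q i) := by
      intro N
      rw [Finset.mul_sum]
      exact Finset.sum_congr rfl fun i _ => by ring
    simp only [heq]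
    exact hS.const_mul_atTop (by norm_num)
  -- the products tend to 0
  have hq2 : ∀ i, (0:ℝ) < (q i:ℝ) := fun i => by exact_mod_cast (hq i).pos
  have hfac : ∀ i, (0:ℝ) ≤ 1 - 1/(2*(q i:ℝ)) := by
    intro i
    have h1 : (1:ℝ) ≤ (q i:ℝ) := by exact_mod_cast (hq i).one_lt.le
    have h2 : 1/(2*(q i:ℝ)) ≤ 1/2 := by
      apply div_le_div_of_nonneg_left (by norm_num) (by norm_num)
      linarith
    linarith
  have hP0 : Tendsto (fun N => ∏ i ∈ Finset.range N, (1 - 1/(2*(q i:ℝ)))) atTop (nhds 0) := by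
    have hPexp : Tendsto (fun N => Real.exp (-∑ i ∈ Finset.range N, 1/(2*(q i:ℝ))))
        atTop (nhds 0) :=
      Real.tendsto_exp_atBot.comp (tendsto_neg_atTop_atBot.comp hS2)
    refine tendsto_of_tendsto_of_tendsto_of_le_of_le tendsto_const_nhds hPexp
      (fun N => Finset.prod_nonneg fun i _ => hfac i) (fun N => ?_)
    calc ∏ i ∈ Finset.range N, (1 - 1/(2*(q i:ℝ)))
        ≤ ∏ i ∈ Finset.range N, Real.exp (-(1/(2*(q i:ℝ)))) := by
          refine Finset.prod_le_prod (fun i _ => hfac i) (fun i _ => ?_)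
          have := Real.add_one_le_exp (-(1/(2*(q i:ℝ))))
          linarith
      _ = Real.exp (-∑ i ∈ Finset.range N, 1/(2*(q i:ℝ))) := by
          rw [← Real.exp_sum, Finset.sum_neg_distrib]
  -- choose N with 2^(A-1) * P N < ε / 2
  obtain ⟨N, hN⟩ : ∃ N, (2:ℝ)^(A-1) * ∏ i ∈ Finset.range N, (1 - 1/(2*(q i:ℝ))) < ε/2 := by
    have h0 : Tendsto (fun N => (2:ℝ)^(A-1) * ∏ i ∈ Finset.range N, (1 - 1/(2*(q i:ℝ))))
        atTop (nhds 0) := by simpa using hP0.const_mul ((2:ℝ)^(A-1))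
    exact (h0.eventually_lt_const (by positivity)).exists
  set P := ∏ i ∈ Finset.range N, (1 - 1/(2*(q i:ℝ))) with hPdef
  have hPnonneg : 0 ≤ P := Finset.prod_nonneg fun i _ => hfac i
  -- choose X
  obtain ⟨X0, hX0⟩ := exists_nat_gt ((2:ℝ)^(A-1) * (3/2)^N * 2 / ε)
  refine ⟨max X0 1, fun x hx => ?_⟩
  have hx1 : 1 ≤ x := le_trans (le_max_right X0 1) hx
  have hxX0 : X0 ≤ x := le_trans (le_max_left X0 1) hx
  have hxR : (0:ℝ) < x := by exact_mod_cast hx1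
  have hcard := main_bound q hq hinj A N x hA
  have hfx : (((Finset.Icc 1 x).filter (fun n => Nat.card {i | q i ∣ n} < A)).card : ℝ) / x
      ≤ (2:ℝ)^(A-1) * P + (2:ℝ)^(A-1) * (3/2)^N / x := by
    rw [div_le_iff₀ hxR]
    calc (((Finset.Icc 1 x).filter (fun n => Nat.card {i | q i ∣ n} < A)).card : ℝ)
        ≤ 2^(A-1) * ((x : ℝ) * P + (3/2)^N) := hcard
      _ = ((2:ℝ)^(A-1) * P + (2:ℝ)^(A-1) * (3/2)^N / x) * x := by field_simp
  have hterm2 : (2:ℝ)^(A-1) * (3/2)^N / x < ε/2 := by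
    rw [div_lt_iff₀ hxR]
    have hX0R : ((2:ℝ)^(A-1) * (3/2)^N * 2 / ε) < (x:ℝ) := by
      calc ((2:ℝ)^(A-1) * (3/2)^N * 2 / ε) < (X0:ℝ) := hX0
        _ ≤ (x:ℝ) := by exact_mod_cast hxX0
    rw [div_lt_iff₀ hε] at hX0R
    nlinarith
  have hnonneg : 0 ≤ (((Finset.Icc 1 x).filter
      (fun n => Nat.card {i | q i ∣ n} < A)).card : ℝ) / x := by positivity
  rw [Real.dist_eq, sub_zero, abs_of_nonneg hnonneg]
  calc (((Finset.Icc 1 x).filter (fun n => Nat.card {i | q i ∣ n} < A)).card : ℝ) / x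
      ≤ (2:ℝ)^(A-1) * P + (2:ℝ)^(A-1) * (3/2)^N / x := hfx
    _ < ε/2 + ε/2 := by exact add_lt_add hN hterm2
    _ = ε := by ring
end

section
/- For every positive integer A, the set of positive integers n such that ψ(n) is not divisible by (∏_{p ≤ A, p prime} p)^A has asymptotic density 0. -/
lemma div_le_div_of_nonneg_right' {a b c : ℝ} (h : a ≤ b) (hc : 0 < c) : a / c ≤ b / c := by
  rw [div_le_div_iff₀ hc hc]
  nlinarith


open Filter ArithmeticFunction vonMangoldt

lemma not_summable_one_div_primes_mod {q : ℕ} [NeZero q] {a : ZMod q} (ha : IsUnit a) :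
    ¬ Summable (fun n : ℕ => if n.Prime ∧ (n : ZMod q) = a then (n : ℝ)⁻¹ else 0) := by
  intro H
  set f : ℕ → ℝ := fun n => if n.Prime ∧ (n : ZMod q) = a then (n : ℝ)⁻¹ else 0 with hf
  have hf0 : ∀ n, 0 ≤ f n := by
    intro n; simp only [hf]; split <;> positivity
  obtain ⟨C, hC⟩ := LSeries_residueClass_lower_bound ha
  set ε : ℝ := ((q.totient : ℝ))⁻¹ / 2 with hε
  have htot : (0:ℝ) < ((q.totient : ℝ))⁻¹ := by
    have := q.totient.pos_of_neZero
    positivity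
  have hε0 : 0 < ε := by positivity
  -- choose N with tail < ε
  obtain ⟨N, hN⟩ : ∃ N, ∑' i, f (i + N) < ε := by
    have h1 : Tendsto (fun N => ∑ i ∈ Finset.range N, f i) atTop (nhds (∑' i, f i)) :=
      H.hasSum.tendsto_sum_nat
    have h2 : Tendsto (fun N => ∑' i, f i - ∑ i ∈ Finset.range N, f i) atTop (nhds 0) := by
      simpa using (tendsto_const_nhds (x := ∑' i, f i)).sub h1
    obtain ⟨N, hN⟩ := (h2.eventually (eventually_lt_nhds hε0)).exists
    refine ⟨N, ?_⟩
    have := Summable.sum_add_tsum_nat_add N H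
    linarith [this]
  set ε' : ℝ := ∑' i, f (i + N) with hε'
  have hε'0 : 0 ≤ ε' := tsum_nonneg fun i => hf0 _
  set C₂ : ℝ := ∑' n, (if Nat.Prime n then 0 else residueClass a n) / (n:ℝ) with hC₂
  set C₃ : ℝ := ∑ n ∈ Finset.range N, vonMangoldt n with hC₃
  have key : ∀ x : ℝ, x ∈ Set.Ioc 1 2 →
      (∑' n, residueClass a n / (n:ℝ) ^ x) ≤ C₂ + C₃ + (x - 1)⁻¹ * ε' := by
    intro x hx
    have hx1 : (1:ℝ) < x := hx.1
    have hs : 0 < x - 1 := by linarith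
    have hsum_w : Summable (fun n => residueClass a n / (n:ℝ) ^ x) :=
      LSeries.summable_real_of_abscissaOfAbsConv_lt <|
        (abscissaOfAbsConv_residueClass_le_one a).trans_lt (by exact_mod_cast hx1)
    have hw0 : ∀ n, 0 ≤ residueClass a n / (n:ℝ) ^ x := fun n =>
      div_nonneg (residueClass_nonneg a n) (by positivity)
    -- prime/nonprime split
    set pp : ℕ → ℝ := fun n => if n.Prime ∧ (n : ZMod q) = a then vonMangoldt n / (n:ℝ) ^ x else 0
      with hpp
    set np : ℕ → ℝ := fun n => (if Nat.Prime n then 0 else residueClass a n) / (n:ℝ) ^ x with hnp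
    have hsplit : ∀ n, residueClass a n / (n:ℝ) ^ x = pp n + np n := by
      intro n
      simp only [hpp, hnp, residueClass, Set.indicator_apply, Set.mem_setOf_eq]
      by_cases h1 : Nat.Prime n <;> by_cases h2 : (n : ZMod q) = a <;>
        simp [h1, h2, add_div]
    have hpp0 : ∀ n, 0 ≤ pp n := by
      intro n; simp only [hpp]; split
      · exact div_nonneg vonMangoldt_nonneg (by positivity)
      · exact le_rfl
    have hnp0 : ∀ n, 0 ≤ np n := by
      intro n
      simp only [hnp]
      refine div_nonneg ?_ (by positivity)
      split
      · exact le_rfl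
      · exact residueClass_nonneg a n
    have hpple : ∀ n, pp n ≤ residueClass a n / (n:ℝ) ^ x := by
      intro n; rw [hsplit n]; linarith [hnp0 n]
    have hnple : ∀ n, np n ≤ residueClass a n / (n:ℝ) ^ x := by
      intro n; rw [hsplit n]; linarith [hpp0 n]
    have hsum_pp : Summable pp := hsum_w.of_nonneg_of_le hpp0 hpple
    have hsum_np : Summable np := hsum_w.of_nonneg_of_le hnp0 hnple
    have htsum_split : (∑' n, residueClass a n / (n:ℝ) ^ x) = (∑' n, pp n) + ∑' n, np n := by
      rw [← Summable.tsum_add hsum_pp hsum_np]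
      exact tsum_congr hsplit
    -- bound np part by C₂
    have hnp_le : (∑' n, np n) ≤ C₂ := by
      refine Summable.tsum_le_tsum (fun n => ?_) hsum_np (summable_residueClass_non_primes_div a)
      simp only [hnp]
      rcases Nat.eq_zero_or_pos n with rfl | hn
      · simp
      · have h1 : (1:ℝ) ≤ (n:ℝ) := by exact_mod_cast hn
        have h2 : (n:ℝ) ≤ (n:ℝ) ^ x := by
          nth_rewrite 1 [← Real.rpow_one (n:ℝ)]
          exact Real.rpow_le_rpow_of_exponent_le h1 hx1.le
        gcongr
        split
        · exact le_rfl
        · exact residueClass_nonneg a n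
    -- bound pp part
    have hpp_le : (∑' n, pp n) ≤ C₃ + (x - 1)⁻¹ * ε' := by
      have hdecomp := Summable.sum_add_tsum_nat_add N hsum_pp
      have hhead : ∑ n ∈ Finset.range N, pp n ≤ C₃ := by
        refine Finset.sum_le_sum fun n _ => ?_
        simp only [hpp]
        split
        · rename_i h
          rcases h with ⟨hp, -⟩
          have h1 : (1:ℝ) ≤ (n:ℝ) ^ x := by
            apply Real.one_le_rpow (by exact_mod_cast hp.one_lt.le) (by linarith)
          exact div_le_self vonMangoldt_nonneg h1
        · exact vonMangoldt_nonneg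
      have htail : (∑' i, pp (i + N)) ≤ (x - 1)⁻¹ * ε' := by
        rw [hε', ← tsum_mul_left]
        refine Summable.tsum_le_tsum (fun i => ?_) (hsum_pp.comp_injective (add_left_injective N))
          (((summable_nat_add_iff N).mpr H).mul_left _)
        set n : ℕ := i + N with hn
        simp only [hpp, hf]
        split
        · rename_i h
          rcases h with ⟨hp, -⟩
          have hn2 : (2:ℝ) ≤ (n:ℝ) := by exact_mod_cast hp.two_le
          have hnpos : (0:ℝ) < (n:ℝ) := by linarith
          have hlog : Real.log n ≤ (x - 1)⁻¹ * (n:ℝ) ^ (x - 1) := by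
            have h3 : Real.log ((n:ℝ) ^ (x-1)) ≤ (n:ℝ) ^ (x-1) := by
              have := Real.log_le_sub_one_of_pos (Real.rpow_pos_of_pos hnpos (x-1))
              linarith
            rw [Real.log_rpow hnpos] at h3
            rw [inv_mul_eq_div, le_div_iff₀ hs]
            nlinarith [h3]
          have hx_split : (n:ℝ) ^ x = (n:ℝ) * (n:ℝ) ^ (x - 1) := by
            nth_rewrite 2 [← Real.rpow_one (n:ℝ)]
            rw [← Real.rpow_add hnpos]
            ring_nf
          rw [vonMangoldt_apply_prime hp, hx_split]
          have hrp : (0:ℝ) < (n:ℝ) ^ (x-1) := Real.rpow_pos_of_pos hnpos _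
          calc Real.log n / ((n:ℝ) * (n:ℝ) ^ (x-1))
              ≤ ((x-1)⁻¹ * (n:ℝ) ^ (x-1)) / ((n:ℝ) * (n:ℝ) ^ (x-1)) := by gcongr
            _ = (x-1)⁻¹ * (n:ℝ)⁻¹ := by
                rw [mul_div_mul_right _ _ hrp.ne', div_eq_mul_inv]
        · positivity
      linarith
    rw [htsum_split]
    linarith
  -- derive contradiction
  set K : ℝ := C + C₂ + C₃ with hK
  have hmain : ∀ x : ℝ, x ∈ Set.Ioc 1 2 → ε / (x - 1) ≤ K := by
    intro x hx
    have h1 := hC hx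
    have h2 := key x hx
    have hs : 0 < x - 1 := by linarith [hx.1]
    have h3 : ((q.totient:ℝ)⁻¹ - ε') / (x-1) ≤ K := by
      rw [sub_div]
      have : ε' / (x - 1) = (x-1)⁻¹ * ε' := by rw [div_eq_inv_mul]
      rw [this]
      linarith
    refine le_trans ?_ h3
    gcongr
    rw [hε]; linarith
  set δ : ℝ := min 1 (ε / (|K| + 1)) with hδ
  have hδ0 : 0 < δ := by
    apply lt_min one_pos
    positivity
  have hδ1 : δ ≤ 1 := min_le_left _ _
  have hx : (1 + δ) ∈ Set.Ioc (1:ℝ) 2 := ⟨by linarith, by linarith⟩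
  have h4 := hmain (1 + δ) hx
  rw [add_sub_cancel_left] at h4
  have h5 : ε / δ ≥ |K| + 1 := by
    rw [ge_iff_le, le_div_iff₀ hδ0]
    calc (|K| + 1) * δ ≤ (|K| + 1) * (ε / (|K| + 1)) := by
          apply mul_le_mul_of_nonneg_left (min_le_right _ _) (by positivity)
      _ = ε := by field_simp
  have h6 : K ≤ |K| := le_abs_self K
  linarith

open Filter

open scoped Classical in
lemma coprime_count_Ico (P : ℕ) : ∀ m : ℕ,
    ((Finset.Ico 0 (m * P)).filter (fun n => P.Coprime n)).card = m * P.totient := by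
  intro m
  induction m with
  | zero => simp
  | succ m ih =>
    have hsplit : Finset.Ico 0 ((m+1) * P) = Finset.Ico 0 (m*P) ∪ Finset.Ico (m*P) (m*P + P) := by
      rw [Finset.Ico_union_Ico_eq_Ico (Nat.zero_le _) (Nat.le_add_right _ _)]
      ring_nf
    rw [hsplit, Finset.filter_union, Finset.card_union_of_disjoint, ih,
      Nat.filter_coprime_Ico_eq_totient P (m*P)]
    · ring
    · exact Finset.disjoint_filter_filter (Finset.Ico_disjoint_Ico_consecutive 0 (m*P) (m*P+P))

open scoped Classical in
lemma coprime_count (P x : ℕ) (hP : 0 < P) :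
    ((Finset.Icc 1 x).filter (fun n => P.Coprime n)).card ≤ (x / P + 1) * P.totient := by
  have h1 : Finset.Icc 1 x ⊆ Finset.Ico 0 ((x / P + 1) * P) := by
    intro n hn
    simp only [Finset.mem_Icc, Finset.mem_Ico] at *
    refine ⟨Nat.zero_le _, lt_of_le_of_lt hn.2 ?_⟩
    have h2 : x / P < x / P + 1 := Nat.lt_succ_self _
    exact (Nat.div_lt_iff_lt_mul hP).mp h2
  calc ((Finset.Icc 1 x).filter (fun n => P.Coprime n)).card
      ≤ ((Finset.Ico 0 ((x/P+1)*P)).filter (fun n => P.Coprime n)).card :=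
        Finset.card_le_card (Finset.filter_subset_filter _ h1)
    _ = (x / P + 1) * P.totient := coprime_count_Ico P _

lemma totient_prod_primes {Q : Finset ℕ} (hQ : ∀ q ∈ Q, q.Prime) :
    (∏ q ∈ Q, q).totient = ∏ q ∈ Q, (q - 1) := by
  induction Q using Finset.induction_on with
  | empty => simp
  | @insert a s ha ih =>
    have hap : a.Prime := hQ a (Finset.mem_insert_self a s)
    have hs : ∀ q ∈ s, q.Prime := fun q hq => hQ q (Finset.mem_insert_of_mem hq)
    rw [Finset.prod_insert ha, Finset.prod_insert ha, Nat.totient_mul, ih hs,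
      Nat.totient_prime hap]
    refine Nat.Coprime.prod_right fun q hq => ?_
    exact (Nat.coprime_primes hap (hs q hq)).mpr (fun h => ha (h ▸ hq))

lemma prod_sub_one_le_exp {Q : Finset ℕ} (hQ : ∀ q ∈ Q, q.Prime) :
    (∏ q ∈ Q, ((q:ℝ) - 1)) ≤ (∏ q ∈ Q, (q:ℝ)) * Real.exp (-∑ q ∈ Q, (q:ℝ)⁻¹) := by
  have h0 : ∀ q ∈ Q, (1:ℝ) ≤ (q:ℝ) := fun q hq => by exact_mod_cast (hQ q hq).one_lt.le
  have hexp : Real.exp (-∑ q ∈ Q, (q:ℝ)⁻¹) = ∏ q ∈ Q, Real.exp (-(q:ℝ)⁻¹) := by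
    rw [← Real.exp_sum, Finset.sum_neg_distrib]
  rw [hexp, ← Finset.prod_mul_distrib]
  refine Finset.prod_le_prod (fun q hq => by linarith [h0 q hq]) (fun q hq => ?_)
  have hq1 := h0 q hq
  have hqpos : (0:ℝ) < q := by linarith
  have h2 : -(q:ℝ)⁻¹ + 1 ≤ Real.exp (-(q:ℝ)⁻¹) := Real.add_one_le_exp _
  have h3 : (q:ℝ) - 1 = (q:ℝ) * (1 - (q:ℝ)⁻¹) := by field_simp
  rw [h3]
  have : (0:ℝ) ≤ (q:ℝ) := by linarith
  nlinarith [h2]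



open Filter

/-- The Dedekind psi function: `ψ(n) = n ∏_{p ∣ n} (1 + 1/p)`, with `ψ(1) = 1`. -/
def psi (n : ℕ) : ℕ := (n / ∏ p ∈ n.primeFactors, p) * ∏ p ∈ n.primeFactors, (p + 1)

lemma dvd_psi_of_prime_dvd {D n q : ℕ} (hn : 0 < n) (hq : q.Prime) (hqn : q ∣ n)
    (hD : D ∣ q + 1) : D ∣ psi n := by
  have h1 : q ∈ n.primeFactors := Nat.mem_primeFactors.mpr ⟨hq, hqn, hn.ne'⟩
  have h2 : q + 1 ∣ ∏ p ∈ n.primeFactors, (p + 1) :=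
    Finset.dvd_prod_of_mem (fun p => p + 1) h1
  exact hD.trans (h2.trans (Dvd.intro_left _ rfl))

set_option maxHeartbeats 1000000 in
open scoped Classical in
/-- For every `A`, the set of `n` for which `ψ(n)` is not divisible by
`(∏_{p ≤ A} p)^A` has density `0`. -/
theorem density_psi_not_divisible_zero (A : ℕ) (hA : 0 < A) :
    Tendsto (fun x : ℕ =>
      (((Finset.Icc 1 x).filter
        (fun n => ¬ (∏ p ∈ (Finset.Icc 1 A).filter Nat.Prime, p) ^ A ∣ psi n)).card : ℝ) / x)
      atTop (nhds 0) := by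
  set D : ℕ := (∏ p ∈ (Finset.Icc 1 A).filter Nat.Prime, p) ^ A with hD
  have hDpos : 0 < D := by
    apply pow_pos
    apply Finset.prod_pos
    intro p hp
    exact (Finset.mem_filter.mp hp).2.pos
  haveI : NeZero D := ⟨hDpos.ne'⟩
  have hunit : IsUnit (-1 : ZMod D) := isUnit_one.neg
  have hdiv := not_summable_one_div_primes_mod (q := D) (a := -1) hunit
  rw [not_summable_iff_tendsto_nat_atTop_of_nonneg
    (fun n => by positivity)] at hdiv
  rw [Metric.tendsto_atTop]
  intro ε hε
  -- choose a finite set Q of primes ≡ -1 mod D with large reciprocal sum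
  set C₀ : ℝ := max 0 (-Real.log (ε / 2)) + 1 with hC₀
  obtain ⟨N₀, hN₀⟩ := (hdiv.eventually_ge_atTop C₀).exists
  set Q : Finset ℕ := (Finset.range N₀).filter (fun n => n.Prime ∧ (n : ZMod D) = -1) with hQdef
  have hQprime : ∀ q ∈ Q, q.Prime := fun q hq => (Finset.mem_filter.mp hq).2.1
  have hQsum : C₀ ≤ ∑ q ∈ Q, (q:ℝ)⁻¹ := by
    rw [hQdef, Finset.sum_filter]
    exact hN₀
  set P : ℕ := ∏ q ∈ Q, q with hPdef
  have hPpos : 0 < P := Finset.prod_pos fun q hq => (hQprime q hq).pos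
  -- totient bound
  have htotbound : (P.totient : ℝ) ≤ (P : ℝ) * (ε / 2) := by
    have h1 : (P.totient : ℝ) = ∏ q ∈ Q, ((q:ℝ) - 1) := by
      rw [hPdef, totient_prod_primes hQprime]
      push_cast [Nat.cast_prod]
      refine Finset.prod_congr rfl fun q hq => ?_
      have := (hQprime q hq).one_lt
      push_cast [Nat.cast_sub this.le]
      ring
    have h2 := prod_sub_one_le_exp hQprime
    have h3 : Real.exp (-∑ q ∈ Q, (q:ℝ)⁻¹) < ε / 2 := by
      have h4 : -∑ q ∈ Q, (q:ℝ)⁻¹ ≤ -C₀ := by linarith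
      have h5 : -C₀ < Real.log (ε / 2) := by
        rw [hC₀]
        have := le_max_right 0 (-Real.log (ε / 2))
        linarith
      calc Real.exp (-∑ q ∈ Q, (q:ℝ)⁻¹) ≤ Real.exp (-C₀) := Real.exp_le_exp.mpr h4
        _ < Real.exp (Real.log (ε / 2)) := Real.exp_lt_exp.mpr h5
        _ = ε / 2 := Real.exp_log (by positivity)
    have hPcast : (P : ℝ) = ∏ q ∈ Q, (q:ℝ) := by rw [hPdef]; push_cast; rfl
    have hPpos' : (0:ℝ) < (P:ℝ) := by exact_mod_cast hPpos
    calc (P.totient : ℝ) = ∏ q ∈ Q, ((q:ℝ) - 1) := h1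
      _ ≤ (∏ q ∈ Q, (q:ℝ)) * Real.exp (-∑ q ∈ Q, (q:ℝ)⁻¹) := h2
      _ = (P:ℝ) * Real.exp (-∑ q ∈ Q, (q:ℝ)⁻¹) := by rw [hPcast]
      _ ≤ (P:ℝ) * (ε / 2) := by nlinarith [h3]
  -- choose threshold for x
  have htend : Tendsto (fun x : ℕ => (P.totient : ℝ) / x) atTop (nhds 0) :=
    tendsto_const_div_atTop_nhds_zero_nat _
  obtain ⟨N₁, hN₁⟩ := (htend.eventually (eventually_lt_nhds (half_pos hε))).exists_forall_of_atTop
  refine ⟨max N₁ 1, fun x hx => ?_⟩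
  have hx1 : 1 ≤ x := le_trans (le_max_right _ _) hx
  have hxN : N₁ ≤ x := le_trans (le_max_left _ _) hx
  have hxpos : (0:ℝ) < (x:ℝ) := by exact_mod_cast hx1
  -- the bad set is contained in the P-coprime set
  have hsubset : ((Finset.Icc 1 x).filter (fun n => ¬ D ∣ psi n)) ⊆
      ((Finset.Icc 1 x).filter (fun n => P.Coprime n)) := by
    intro n hn
    rw [Finset.mem_filter] at hn ⊢
    refine ⟨hn.1, ?_⟩
    by_contra hcop
    have hn1 : 1 ≤ n := (Finset.mem_Icc.mp hn.1).1
    -- gcd P n has a prime factor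
    have hg : Nat.gcd P n ≠ 1 := hcop
    have hg0 : Nat.gcd P n ≠ 0 := by
      intro h
      exact hPpos.ne' (Nat.eq_zero_of_gcd_eq_zero_left h)
    obtain ⟨r, hr, hrg⟩ := Nat.exists_prime_and_dvd hg
    have hrP : r ∣ P := hrg.trans (Nat.gcd_dvd_left _ _)
    have hrn : r ∣ n := hrg.trans (Nat.gcd_dvd_right _ _)
    obtain ⟨q, hqQ, hrq⟩ := hr.prime.exists_mem_finset_dvd hrP
    have hq := hQprime q hqQ
    have hrq' : r = q := (Nat.prime_dvd_prime_iff_eq hr hq).mp hrq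
    subst hrq'
    have hmod : (r : ZMod D) = -1 := (Finset.mem_filter.mp hqQ).2.2
    have hDr : D ∣ r + 1 := by
      have : ((r + 1 : ℕ) : ZMod D) = 0 := by push_cast [hmod]; ring
      exact (ZMod.natCast_eq_zero_iff _ _).mp this
    exact hn.2 (dvd_psi_of_prime_dvd hn1 hr hrn hDr)
  have hcard : (((Finset.Icc 1 x).filter (fun n => ¬ D ∣ psi n)).card : ℝ) ≤
      ((x / P + 1) * P.totient : ℕ) := by
    exact_mod_cast le_trans (Finset.card_le_card hsubset) (coprime_count P x hPpos)
  -- final computation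
  rw [Real.dist_eq, sub_zero, abs_of_nonneg (div_nonneg (Nat.cast_nonneg _) (Nat.cast_nonneg _))]
  have hPpos' : (0:ℝ) < (P:ℝ) := by exact_mod_cast hPpos
  have h6 : (((x / P + 1) * P.totient : ℕ) : ℝ) ≤ ((x:ℝ)/P + 1) * P.totient := by
    push_cast
    have := Nat.cast_div_le (m := x) (n := P) (α := ℝ)
    have ht0 : (0:ℝ) ≤ (P.totient : ℝ) := by positivity
    nlinarith [this]
  have h7 : ((x:ℝ)/P + 1) * P.totient / x = (P.totient:ℝ)/P + (P.totient:ℝ)/x := by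
    field_simp
  have h8 : (P.totient:ℝ)/P ≤ ε/2 := by
    rw [div_le_iff₀ hPpos']
    nlinarith [htotbound]
  have h9 : (P.totient:ℝ)/x < ε/2 := hN₁ x hxN
  calc (((Finset.Icc 1 x).filter (fun n => ¬ D ∣ psi n)).card : ℝ) / x
      ≤ (((x / P + 1) * P.totient : ℕ) : ℝ) / x :=
        div_le_div_of_nonneg_right' hcard hxpos
    _ ≤ ((x:ℝ)/P + 1) * P.totient / x :=
        div_le_div_of_nonneg_right' h6 hxpos
    _ = (P.totient:ℝ)/P + (P.totient:ℝ)/x := h7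
    _ < ε := by linarith
end

section
/- Suppose the positive integers N₁, …, N_k and a satisfy gcd(a, N_j) = 1 for every j = 1, …, k, and ψ(a)/a = (N₁ + ⋯ + N_k)/ψ(N_j) for every j = 1, …, k. Then aN₁, …, aN_k form a ψ-amicable k-tuple, i.e. ψ(aN₁) = ψ(aN₂) = ⋯ = ψ(aN_k) = aN₁ + aN₂ + ⋯ + aN_k. -/
lemma psi_pos {n : ℕ} (hn : 0 < n) : 0 < psi n := by
  unfold psi
  apply Nat.mul_pos
  · exact Nat.div_pos (Nat.le_of_dvd hn (Nat.prod_primeFactors_dvd _))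
      (Finset.prod_pos fun p hp => (Nat.prime_of_mem_primeFactors hp).pos)
  · exact Finset.prod_pos fun p _ => Nat.succ_pos _

lemma psi_mul_coprime {m n : ℕ} (hm : 0 < m) (hn : 0 < n) (h : Nat.Coprime m n) :
    psi (m * n) = psi m * psi n := by
  unfold psi
  rw [Nat.primeFactors_mul hm.ne' hn.ne',
    Finset.prod_union (Nat.Coprime.disjoint_primeFactors h),
    Finset.prod_union (Nat.Coprime.disjoint_primeFactors h),
    Nat.mul_div_mul_comm (Nat.prod_primeFactors_dvd _) (Nat.prod_primeFactors_dvd _)]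
  ring

/-- If `gcd(a, Nⱼ) = 1` and `ψ(a)/a = (N₁ + ⋯ + N_k)/ψ(Nⱼ)` for every `j`, then
`aN₁, …, aN_k` form a ψ-amicable `k`-tuple. -/
theorem psi_amicable_tuple_construction (k : ℕ) (N : Fin k → ℕ) (a : ℕ)
    (ha : 0 < a) (hN : ∀ j, 0 < N j)
    (hcop : ∀ j, Nat.gcd a (N j) = 1)
    (hratio : ∀ j, (psi a : ℝ) / a = (∑ i, (N i : ℝ)) / psi (N j)) :
    ∀ j, psi (a * N j) = ∑ i, a * N i := by
  intro j
  have key : psi a * psi (N j) = a * ∑ i, N i := by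
    have h1 := hratio j
    have hpa : (0 : ℝ) < a := by exact_mod_cast ha
    have hpn : (0 : ℝ) < psi (N j) := by exact_mod_cast psi_pos (hN j)
    have : (psi a : ℝ) * psi (N j) = a * ∑ i, (N i : ℝ) := by
      field_simp at h1
      linarith [h1]
    exact_mod_cast this
  rw [psi_mul_coprime ha (hN j) (hcop j), key, Finset.mul_sum]
end

section
/- For every prime p, the sum of the reciprocals of the primes q satisfying q ≡ −1 (mod p) diverges: ∑_{q prime, q ≡ −1 (mod p)} 1/q = ∞. -/
open ArithmeticFunction vonMangoldt Filter

/-- For every prime `p`, the sum of reciprocals of primes `q ≡ −1 (mod p)` diverges. -/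
theorem not_summable_one_div_primes_neg_one_mod (p : ℕ) (hp : p.Prime) :
    ¬ Summable (fun q : {q : ℕ // q.Prime ∧ (q : ZMod p) = -1} => (1 : ℝ) / (q : ℕ)) := by
  intro H
  haveI : NeZero p := ⟨hp.pos.ne'⟩
  have ha : IsUnit (-1 : ZMod p) := isUnit_one.neg
  set S : Set ℕ := {n : ℕ | n.Prime ∧ (n : ZMod p) = -1} with hS_def
  have hg : Summable (S.indicator fun n : ℕ ↦ (1 : ℝ) / n) := by
    rw [← summable_subtype_iff_indicator]; exact H
  set g : ℕ → ℝ := S.indicator fun n : ℕ ↦ (1 : ℝ) / n with hg_def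
  have hg0 : ∀ n, 0 ≤ g n := fun n ↦ Set.indicator_apply_nonneg fun _ ↦ by positivity
  set Stot : ℝ := ∑' n, g n with hStot
  have hStot0 : 0 ≤ Stot := tsum_nonneg hg0
  set T : ℝ := (p.totient : ℝ)⁻¹ with hT
  have hT0 : 0 < T := inv_pos.mpr (by exact_mod_cast p.totient.pos_of_neZero)
  obtain ⟨N, hN1, htail⟩ : ∃ N : ℕ, 1 ≤ N ∧
      ∑' (n : {m : ℕ // m ∉ Finset.range N}), g n ≤ T / 2 := by
    have h1 : ∀ᶠ s : Finset ℕ in atTop,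
        ∑' (n : {m : ℕ // m ∉ s}), g n < T / 2 :=
      (tendsto_tsum_compl_atTop_zero g).eventually_lt_const (by positivity)
    obtain ⟨s₀, hs₀⟩ := eventually_atTop.mp h1
    refine ⟨(s₀.sup _root_.id) + 1, le_add_self, le_of_lt ?_⟩
    refine hs₀ _ fun n hn ↦ Finset.mem_range.mpr ?_
    exact Nat.lt_succ_of_le (Finset.le_sup (f := _root_.id) hn)
  set C₀ : ℝ := ∑' n : ℕ, (if n.Prime then 0 else residueClass (-1 : ZMod p) n) / n with hC₀
  have hsumC₀ := summable_residueClass_non_primes_div (-1 : ZMod p)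
  obtain ⟨C, hC⟩ := LSeries_residueClass_lower_bound ha
  have key : ∀ x ∈ Set.Ioc (1:ℝ) 2,
      ∑' n : ℕ, residueClass (-1 : ZMod p) n / (n : ℝ) ^ x ≤
        C₀ + (Real.log N * Stot + (T / 2) / (x - 1)) := by
    intro x hx
    have hx1 : (1:ℝ) < x := hx.1
    have hxpos : 0 < x - 1 := by linarith
    set f : ℕ → ℝ := fun n ↦ Real.log n / (n : ℝ) ^ (x - 1) with hf
    have hf0 : ∀ n, 0 ≤ f n := by
      intro n
      rcases Nat.eq_zero_or_pos n with rfl | hn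
      · simp [hf]
      · have h1 : (1:ℝ) ≤ n := by exact_mod_cast hn
        have := Real.log_nonneg h1
        have : (0:ℝ) < (n : ℝ) ^ (x - 1) := by positivity
        simp only [hf]
        positivity
    have hfle : ∀ n, f n ≤ (x - 1)⁻¹ := by
      intro n
      rcases Nat.eq_zero_or_pos n with rfl | hn
      · simp only [hf, Nat.cast_zero, Real.log_zero, zero_div]
        positivity
      · have h1 : (0:ℝ) < n := by exact_mod_cast hn
        have hlog : Real.log n ≤ (n : ℝ) ^ (x - 1) / (x - 1) :=
          Real.log_le_rpow_div (le_of_lt h1) hxpos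
        rw [hf, div_le_iff₀ (by positivity)]
        calc Real.log n ≤ (n : ℝ) ^ (x - 1) / (x - 1) := hlog
          _ = (x - 1)⁻¹ * (n : ℝ) ^ (x - 1) := by ring
    have hdecomp : ∀ n : ℕ, residueClass (-1 : ZMod p) n / (n : ℝ) ^ x =
        (if n.Prime then 0 else residueClass (-1 : ZMod p) n) / (n : ℝ) ^ x
          + g n * f n := by
      intro n
      by_cases hnp : n.Prime
      · rw [if_pos hnp, zero_div, zero_add]
        by_cases hnS : n ∈ S
        · have hmem : n ∈ {m : ℕ | (m : ZMod p) = -1} := hnS.2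
          rw [residueClass, Set.indicator_of_mem hmem, vonMangoldt_apply_prime hnp,
            hg_def, Set.indicator_of_mem hnS]
          have hnpos : (0:ℝ) < n := by exact_mod_cast hnp.pos
          have hxe : (n:ℝ) ^ x = (n:ℝ) * (n:ℝ) ^ (x - 1) := by
            rw [← Real.rpow_one_add' (le_of_lt hnpos) (by
              intro h; rw [show (1:ℝ) + (x-1) = x by ring] at h; linarith)]
            congr 1; ring
          simp only [hf, hxe, one_div, div_eq_mul_inv, mul_inv]
          ring
        · have hmem : n ∉ {m : ℕ | (m : ZMod p) = -1} := fun h ↦ hnS ⟨hnp, h⟩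
          rw [residueClass, Set.indicator_of_notMem hmem, hg_def,
            Set.indicator_of_notMem hnS, zero_div, zero_mul]
      · have hnS : n ∉ S := fun h ↦ hnp h.1
        rw [if_neg hnp, hg_def, Set.indicator_of_notMem hnS, zero_mul, add_zero]
    have hnn : ∀ n : ℕ, 0 ≤ if n.Prime then 0 else residueClass (-1 : ZMod p) n := by
      intro n
      have := residueClass_nonneg (-1 : ZMod p) n
      split_ifs <;> simp [this]
    have hcmp : ∀ n : ℕ,
        (if n.Prime then 0 else residueClass (-1 : ZMod p) n) / (n : ℝ) ^ x ≤
        (if n.Prime then 0 else residueClass (-1 : ZMod p) n) / n := by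
      intro n
      rcases Nat.eq_zero_or_pos n with rfl | hn
      · simp
      · have h1 : (1:ℝ) ≤ n := by exact_mod_cast hn
        have hle : (n:ℝ) ≤ (n:ℝ) ^ x := by
          nth_rewrite 1 [show (n:ℝ) = (n:ℝ) ^ (1:ℝ) by rw [Real.rpow_one]]
          exact Real.rpow_le_rpow_of_exponent_le h1 (le_of_lt hx1)
        exact div_le_div_of_nonneg_left (hnn n) (by linarith) hle
    have hsum_np : Summable fun n : ℕ ↦
        (if n.Prime then 0 else residueClass (-1 : ZMod p) n) / (n : ℝ) ^ x := by
      refine hsumC₀.of_nonneg_of_le (fun n ↦ ?_) hcmp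
      have := hnn n
      positivity
    have hsum_gf : Summable fun n : ℕ ↦ g n * f n := by
      refine (hg.div_const (x-1)).of_nonneg_of_le
        (fun n ↦ mul_nonneg (hg0 n) (hf0 n)) (fun n ↦ ?_)
      rw [div_eq_mul_inv]
      exact mul_le_mul_of_nonneg_left (hfle n) (hg0 n)
    rw [tsum_congr hdecomp, Summable.tsum_add hsum_np hsum_gf]
    have hnp_le : ∑' n : ℕ, (if n.Prime then 0 else residueClass (-1 : ZMod p) n) / (n : ℝ) ^ x
        ≤ C₀ := Summable.tsum_le_tsum hcmp hsum_np hsumC₀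
    have hgf_le : ∑' n, g n * f n ≤ Real.log N * Stot + (T / 2) / (x - 1) := by
      rw [← Summable.sum_add_tsum_compl (s := Finset.range N) hsum_gf]
      have hhead : ∑ n ∈ Finset.range N, g n * f n ≤ Real.log N * Stot := by
        calc ∑ n ∈ Finset.range N, g n * f n
            ≤ ∑ n ∈ Finset.range N, Real.log N * g n := by
              refine Finset.sum_le_sum fun n hn ↦ ?_
              rcases Nat.eq_zero_or_pos n with rfl | hn0
              · have h0S : (0:ℕ) ∉ S := by
                  simp [hS_def, Nat.not_prime_zero]
                simp [hg_def, Set.indicator_of_notMem h0S]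
              · have h1 : (1:ℝ) ≤ n := by exact_mod_cast hn0
                have hfn : f n ≤ Real.log N := by
                  have hd : (1:ℝ) ≤ (n:ℝ) ^ (x - 1) :=
                    Real.one_le_rpow h1 (le_of_lt hxpos)
                  calc f n = Real.log n / (n:ℝ) ^ (x-1) := rfl
                    _ ≤ Real.log n / 1 :=
                        div_le_div_of_nonneg_left (Real.log_nonneg h1) one_pos hd
                    _ = Real.log n := div_one _
                    _ ≤ Real.log N := Real.log_le_log (by linarith)
                        (by exact_mod_cast (Finset.mem_range.mp hn).le)
                calc g n * f n ≤ g n * Real.log N :=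
                      mul_le_mul_of_nonneg_left hfn (hg0 n)
                  _ = Real.log N * g n := mul_comm _ _
          _ = Real.log N * ∑ n ∈ Finset.range N, g n := by rw [Finset.mul_sum]
          _ ≤ Real.log N * Stot := by
              refine mul_le_mul_of_nonneg_left ?_
                (Real.log_nonneg (by exact_mod_cast hN1))
              exact Summable.sum_le_tsum _ (fun n _ ↦ hg0 n) hg
      have htailb : ∑' (n : {m : ℕ // m ∉ Finset.range N}), g n.1 * f n.1
          ≤ (T / 2) / (x - 1) := by
        calc ∑' (n : {m : ℕ // m ∉ Finset.range N}), g n.1 * f n.1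
            ≤ ∑' (n : {m : ℕ // m ∉ Finset.range N}), g n.1 / (x - 1) := by
              refine Summable.tsum_le_tsum (fun n ↦ ?_) (hsum_gf.subtype _)
                ((hg.div_const (x-1)).subtype _)
              rw [div_eq_mul_inv]
              exact mul_le_mul_of_nonneg_left (hfle n.1) (hg0 n.1)
          _ = (∑' (n : {m : ℕ // m ∉ Finset.range N}), g n.1) / (x - 1) :=
              tsum_div_const ..
          _ ≤ (T / 2) / (x - 1) := by gcongr
      exact add_le_add hhead htailb
    linarith
  set D : ℝ := C + C₀ + Real.log N * Stot with hD
  have hmain : ∀ x ∈ Set.Ioc (1:ℝ) 2, (T/2) / (x-1) ≤ D := by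
    intro x hx
    have h1 := hC hx
    have h2 := key x hx
    have h3 : T / (x-1) - C ≤ C₀ + (Real.log N * Stot + (T/2)/(x-1)) := le_trans h1 h2
    have hxx : T / (x-1) = (T/2)/(x-1) + (T/2)/(x-1) := by ring
    linarith
  set δ : ℝ := min 1 ((T/2) / (|D| + 1)) with hδ
  have hδ0 : 0 < δ := lt_min one_pos (by positivity)
  have hδ1 : δ ≤ 1 := min_le_left _ _
  have hxmem : (1 + δ) ∈ Set.Ioc (1:ℝ) 2 := ⟨by linarith, by linarith⟩
  have h3 := hmain (1+δ) hxmem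
  have h4 : |D| + 1 ≤ (T/2) / δ := by
    rw [le_div_iff₀ hδ0]
    calc (|D|+1) * δ ≤ (|D|+1) * ((T/2)/(|D|+1)) := by
          refine mul_le_mul_of_nonneg_left (min_le_right _ _) (by positivity)
      _ = T/2 := by field_simp
  have heq : (1 + δ) - 1 = δ := by ring
  rw [heq] at h3
  have hlt : D < |D| + 1 := lt_of_le_of_lt (le_abs_self D) (by linarith)
  linarith
end
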